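/- arXiv:funct-an/9508002 — 3 statements merged into one kernel-verified Lean document; each statement's English description precedes it below -/
import Mathlib

section
/- The hyperbolic Baker–Akhiezer function Φ(x;ν) = κ(coth(κx) − coth(κν))e^{κx·coth(κν)} satisfies the addition formula Φ(x+y;ν)·(℘(x) − ℘(y)) = Φ(x;ν)Φ'(y;ν) − Φ(y;ν)Φ'(x;ν), where ℘(x) = κ²/3 + κ²/sinh²(κx) is the degenerate Weierstrass ℘-function. -/
open Complex

/-- `Φ(·; ν)` is `hypBakerAkhiezer κ (coth (κ ν))`. -/
noncomputable def hypBakerAkhiezer (κ C z : ℂ) : ℂ :=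
  κ * (cosh (κ * z) / sinh (κ * z) - C) * exp (κ * z * C)

lemma hasDerivAt_cosh_mul_div_sinh_mul (κ t : ℂ) (ht : sinh (κ * t) ≠ 0) :
    HasDerivAt (fun z => cosh (κ * z) / sinh (κ * z)) (-κ / sinh (κ * t) ^ 2) t := by
  have hlin : HasDerivAt (fun z => κ * z) κ t := by
    simpa using (hasDerivAt_id t).const_mul κ
  have hcosh : HasDerivAt (fun z => cosh (κ * z)) (sinh (κ * t) * κ) t :=
    (hasDerivAt_cosh (κ * t)).comp t hlin
  have hsinh : HasDerivAt (fun z => sinh (κ * z)) (cosh (κ * t) * κ) t :=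
    (hasDerivAt_sinh (κ * t)).comp t hlin
  refine (hcosh.div hsinh ht).congr_deriv ?_
  field_simp
  linear_combination -κ * cosh_sq_sub_sinh_sq (κ * t)

lemma hasDerivAt_hypBakerAkhiezer (κ C t : ℂ) (ht : sinh (κ * t) ≠ 0) :
    HasDerivAt (hypBakerAkhiezer κ C)
      (κ * C * hypBakerAkhiezer κ C t - κ ^ 2 * exp (κ * t * C) / sinh (κ * t) ^ 2) t := by
  have hexp : HasDerivAt (fun z => exp (κ * z * C)) (exp (κ * t * C) * (κ * C)) t := by
    have hlin : HasDerivAt (fun z => κ * z * C) (κ * C) t := by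
      simpa using ((hasDerivAt_id t).const_mul κ).mul_const C
    exact (hasDerivAt_exp (κ * t * C)).comp t hlin
  refine
    (((hasDerivAt_cosh_mul_div_sinh_mul κ t ht).sub_const C).const_mul κ).mul hexp |>.congr_deriv ?_
  unfold hypBakerAkhiezer
  ring

lemma cosh_add_mul_sinh_sq_sub (u v : ℂ) :
    cosh (u + v) * (sinh v ^ 2 - sinh u ^ 2)
      = sinh (u + v) * (sinh v * cosh v - sinh u * cosh u) := by
  rw [cosh_add, sinh_add]
  linear_combination sinh u * sinh v * (cosh_sq_sub_sinh_sq u - cosh_sq_sub_sinh_sq v)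

lemma coth_add_sub_mul_inv_sinh_sq_sub (u v C : ℂ) (hu : sinh u ≠ 0) (hv : sinh v ≠ 0)
    (huv : sinh (u + v) ≠ 0) :
    (cosh (u + v) / sinh (u + v) - C) * (1 / sinh u ^ 2 - 1 / sinh v ^ 2)
      = (cosh v / sinh v - C) / sinh u ^ 2 - (cosh u / sinh u - C) / sinh v ^ 2 := by
  field_simp
  linear_combination cosh_add_mul_sinh_sq_sub u v

/-- The exponentials factor as `e^{κ(x+y)C} = e^{κxC} e^{κyC}`, and the `κ C Φ` parts of the
derivatives cancel, leaving `coth_add_sub_mul_inv_sinh_sq_sub`. -/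
theorem hypBakerAkhiezer_add (κ C x y : ℂ) (hx : sinh (κ * x) ≠ 0) (hy : sinh (κ * y) ≠ 0)
    (hxy : sinh (κ * (x + y)) ≠ 0) :
    hypBakerAkhiezer κ C (x + y) * (κ ^ 2 / sinh (κ * x) ^ 2 - κ ^ 2 / sinh (κ * y) ^ 2)
      = hypBakerAkhiezer κ C x * deriv (hypBakerAkhiezer κ C) y
        - hypBakerAkhiezer κ C y * deriv (hypBakerAkhiezer κ C) x := by
  rw [(hasDerivAt_hypBakerAkhiezer κ C x hx).deriv, (hasDerivAt_hypBakerAkhiezer κ C y hy).deriv]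
  unfold hypBakerAkhiezer
  have hexp : exp (κ * (x + y) * C) = exp (κ * x * C) * exp (κ * y * C) := by
    rw [← exp_add]; ring_nf
  rw [hexp, mul_add]
  rw [mul_add] at hxy
  linear_combination κ ^ 3 * exp (κ * x * C) * exp (κ * y * C) *
    coth_add_sub_mul_inv_sinh_sq_sub (κ * x) (κ * y) C hx hy hxy

theorem stmt_5_general
    (κ ν x y : ℂ)
    (Φ : ℂ → ℂ)
    (hΦ : ∀ z, Φ z = κ * (Complex.cosh (κ * z) / Complex.sinh (κ * z)
            - Complex.cosh (κ * ν) / Complex.sinh (κ * ν))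
          * Complex.exp (κ * z * (Complex.cosh (κ * ν) / Complex.sinh (κ * ν))))
    (℘ : ℂ → ℂ)
    (h℘ : ∀ z, ℘ z = κ ^ 2 / 3 + κ ^ 2 / Complex.sinh (κ * z) ^ 2)
    (hx : Complex.sinh (κ * x) ≠ 0)
    (hy : Complex.sinh (κ * y) ≠ 0)
    (hxy : Complex.sinh (κ * (x + y)) ≠ 0) :
    Φ (x + y) * (℘ x - ℘ y) = Φ x * deriv Φ y - Φ y * deriv Φ x := by
  obtain rfl : Φ = hypBakerAkhiezer κ (cosh (κ * ν) / sinh (κ * ν)) := funext hΦ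
  rw [h℘, h℘, add_sub_add_left_eq_sub]
  exact hypBakerAkhiezer_add κ _ x y hx hy hxy

theorem stmt_5
    (κ ν x y : ℂ)
    (Φ : ℂ → ℂ)
    (hΦ : ∀ z, Φ z = κ * (Complex.cosh (κ * z) / Complex.sinh (κ * z)
            - Complex.cosh (κ * ν) / Complex.sinh (κ * ν))
          * Complex.exp (κ * z * (Complex.cosh (κ * ν) / Complex.sinh (κ * ν))))
    (℘ : ℂ → ℂ)
    (h℘ : ∀ z, ℘ z = κ ^ 2 / 3 + κ ^ 2 / Complex.sinh (κ * z) ^ 2)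
    (hx : Complex.sinh (κ * x) ≠ 0)
    (hy : Complex.sinh (κ * y) ≠ 0)
    (hxy : Complex.sinh (κ * (x + y)) ≠ 0)
    (hν : Complex.sinh (κ * ν) ≠ 0)
    (hνx : Complex.sinh (κ * (ν - x)) ≠ 0)
    (hνy : Complex.sinh (κ * (ν - y)) ≠ 0)
    (hνxy : Complex.sinh (κ * (ν - x - y)) ≠ 0) :
    Φ (x + y) * (℘ x - ℘ y) = Φ x * deriv Φ y - Φ y * deriv Φ x :=
  stmt_5_general κ ν x y Φ hΦ ℘ h℘ hx hy hxy
end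

section
/- Conversely, if the functions satisfy both Ψ₃(x+y)·D(x,y) = −Ψ₂(x+y)·N(x,y) and Ψ₁(x+y)·D(x,y) = −Ψ₂(x+y)·M(x,y) for all x,y, where D(x,y) = φ₄(x)φ₅(y) − φ₄(y)φ₅(x), N(x,y) = φ₂(x)φ₃(y) − φ₂(y)φ₃(x), and M(x,y) = φ₂(x)φ₅(x)φ₃(y)φ₄(y) − φ₂(y)φ₅(y)φ₃(x)φ₄(x), and if D(x,y) ≠ 0 for all x ≠ y, then Ψ₁(x+y) = Ψ₂(x+y)φ₂(x)φ₃(y) + Ψ₃(x+y)φ₄(x)φ₅(y) for all x ≠ y. -/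
theorem stmt_10
    (Ψ₁ Ψ₂ Ψ₃ φ₂ φ₃ φ₄ φ₅ : ℂ → ℂ)
    (D N M : ℂ → ℂ → ℂ)
    (hD : ∀ x y, D x y = φ₄ x * φ₅ y - φ₄ y * φ₅ x)
    (hN : ∀ x y, N x y = φ₂ x * φ₃ y - φ₂ y * φ₃ x)
    (hM : ∀ x y, M x y = φ₂ x * φ₅ x * (φ₃ y * φ₄ y) - φ₂ y * φ₅ y * (φ₃ x * φ₄ x))
    (h1 : ∀ x y : ℂ, Ψ₃ (x + y) * D x y = -(Ψ₂ (x + y) * N x y))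
    (h2 : ∀ x y : ℂ, Ψ₁ (x + y) * D x y = -(Ψ₂ (x + y) * M x y))
    (hDne : ∀ x y : ℂ, x ≠ y → D x y ≠ 0) :
    ∀ x y : ℂ, x ≠ y →
      Ψ₁ (x + y) = Ψ₂ (x + y) * φ₂ x * φ₃ y + Ψ₃ (x + y) * φ₄ x * φ₅ y := by
  intro x y hxy
  have hMND : M x y = N x y * (φ₄ x * φ₅ y) - φ₂ x * φ₃ y * D x y := by
    rw [hM, hN, hD]
    ring
  apply mul_right_cancel₀ (hDne x y hxy)
  calc Ψ₁ (x + y) * D x y = -(Ψ₂ (x + y) * M x y) := h2 x y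
    _ = (Ψ₂ (x + y) * φ₂ x * φ₃ y + Ψ₃ (x + y) * φ₄ x * φ₅ y) * D x y := by
      rw [hMND]
      linear_combination -(φ₄ x * φ₅ y) * h1 x y
end

section
/- Cayley's addition theorem for sn in determinant form: sn(x+y)·(sn'(x)sn(y) − sn'(y)sn(x)) = sn²(y) − sn²(x), equivalently sn(x+y) = (sn²(y) − sn²(x))/(sn(y)sn'(x) − sn(x)sn'(y)) wherever the denominator is nonzero, with sn' = cn·dn. -/
/-!
With `s = x + y` fixed, put `P u = sn u`, `Q u = sn (s - u)`, `N = sn' u · Q + P · sn' (s - u)`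
(the numerator of the classical addition formula) and `B = 1 - m P² Q²`. Differentiating in `u`
and using `sn'' = 2 m sn³ - (1 + m) sn` gives `B N' = B' N`, so `N - sn s · B` satisfies the
same linear equation; it vanishes at `u = 0` where `B = 1`, hence everywhere by uniqueness and
the identity theorem. This is `sn s · B = N`. The algebraic identity
`N · (sn' u · Q - P · sn' (s - u)) = (Q² - P²) · B` then gives the determinant form after
cancelling the entire function `B`, which is not identically zero.
-/

open Filter Metric Topology

theorem Differentiable.eq_zero_of_eventuallyEq_zero {f : ℂ → ℂ} (hf : Differentiable ℂ f)
    {z₀ : ℂ} (h : f =ᶠ[𝓝 z₀] 0) : f = 0 :=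
  AnalyticOnNhd.eq_of_eventuallyEq (fun z _ => hf.analyticAt z) (fun _ _ => analyticAt_const)
    h

theorem Differentiable.eq_zero_of_mul_eq_zero {f g : ℂ → ℂ} {z₀ : ℂ}
    (hf : ContinuousAt f z₀) (hg : Differentiable ℂ g) (hf₀ : f z₀ ≠ 0)
    (hfg : ∀ z, f z * g z = 0) : g = 0 :=
  hg.eq_zero_of_eventuallyEq_zero <| (hf.eventually_ne hf₀).mono fun z hz =>
    (mul_eq_zero.1 (hfg z)).resolve_left hz

theorem eq_zero_of_mul_deriv_eq_deriv_mul {B C B' C' : ℂ → ℂ} {z₀ : ℂ}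
    (hB : ∀ z, HasDerivAt B (B' z) z) (hC : ∀ z, HasDerivAt C (C' z) z)
    (hBC : ∀ z, B z * C' z = B' z * C z) (hB₀ : B z₀ ≠ 0) (hC₀ : C z₀ = 0) : C = 0 := by
  obtain ⟨ε, hε, hBne⟩ :=
    eventually_nhds_iff_ball.1 ((hB z₀).continuousAt.eventually_ne hB₀)
  have hquot : ∀ z ∈ ball z₀ ε, HasDerivAt (fun z => C z / B z) 0 z := fun z hz =>
    ((hC z).div (hB z) (hBne z hz)).congr_deriv <|
      div_eq_zero_iff.2 (Or.inl (by linear_combination hBC z))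
  have hnear : ∀ z ∈ ball z₀ ε, C z = 0 := fun z hz => by
    have hconst : C z / B z = C z₀ / B z₀ :=
      isOpen_ball.is_const_of_deriv_eq_zero (convex_ball z₀ ε).isPreconnected
        (fun w hw => (hquot w hw).differentiableAt.differentiableWithinAt)
        (fun w hw => (hquot w hw).deriv) hz (mem_ball_self hε)
    rw [hC₀, zero_div, div_eq_zero_iff] at hconst
    exact hconst.resolve_right (hBne z hz)
  exact Differentiable.eq_zero_of_eventuallyEq_zero (fun z => (hC z).differentiableAt)
    (eventually_nhds_iff_ball.2 ⟨ε, hε, hnear⟩)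

structure IsJacobiTriple (m : ℂ) (sn cn dn : ℂ → ℂ) : Prop where
  sn_sq_add_cn_sq : ∀ x, sn x ^ 2 + cn x ^ 2 = 1
  dn_sq_add_mul_sn_sq : ∀ x, dn x ^ 2 + m * sn x ^ 2 = 1
  hasDerivAt_sn : ∀ x, HasDerivAt sn (cn x * dn x) x
  hasDerivAt_cn : ∀ x, HasDerivAt cn (-(sn x * dn x)) x
  hasDerivAt_dn : ∀ x, HasDerivAt dn (-(m * sn x * cn x)) x
  sn_zero : sn 0 = 0
  cn_zero : cn 0 = 1
  dn_zero : dn 0 = 1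

namespace IsJacobiTriple

variable {m : ℂ} {sn cn dn : ℂ → ℂ}

theorem differentiable_sn (J : IsJacobiTriple m sn cn dn) : Differentiable ℂ sn :=
  fun x => (J.hasDerivAt_sn x).differentiableAt

theorem differentiable_cn (J : IsJacobiTriple m sn cn dn) : Differentiable ℂ cn :=
  fun x => (J.hasDerivAt_cn x).differentiableAt

theorem differentiable_dn (J : IsJacobiTriple m sn cn dn) : Differentiable ℂ dn :=
  fun x => (J.hasDerivAt_dn x).differentiableAt

theorem hasDerivAt_cn_mul_dn (J : IsJacobiTriple m sn cn dn) (x : ℂ) :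
    HasDerivAt (fun x => cn x * dn x) (2 * m * sn x ^ 3 - (1 + m) * sn x) x :=
  ((J.hasDerivAt_cn x).mul (J.hasDerivAt_dn x)).congr_deriv <| by
    linear_combination (-sn x) * J.dn_sq_add_mul_sn_sq x + (-m * sn x) * J.sn_sq_add_cn_sq x

theorem cn_mul_dn_sq (J : IsJacobiTriple m sn cn dn) (x : ℂ) :
    (cn x * dn x) ^ 2 = (1 - sn x ^ 2) * (1 - m * sn x ^ 2) := by
  linear_combination (dn x ^ 2) * J.sn_sq_add_cn_sq x + (1 - sn x ^ 2) * J.dn_sq_add_mul_sn_sq x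

theorem numerator_mul_det (J : IsJacobiTriple m sn cn dn) (x y : ℂ) :
    (cn x * dn x * sn y + sn x * (cn y * dn y)) * (cn x * dn x * sn y - sn x * (cn y * dn y))
      = (sn y ^ 2 - sn x ^ 2) * (1 - m * sn x ^ 2 * sn y ^ 2) := by
  linear_combination sn y ^ 2 * J.cn_mul_dn_sq x - sn x ^ 2 * J.cn_mul_dn_sq y

theorem hasDerivAt_sn_const_sub (J : IsJacobiTriple m sn cn dn) (s u : ℂ) :
    HasDerivAt (fun u => sn (s - u)) (-(cn (s - u) * dn (s - u))) u :=
  (J.hasDerivAt_sn (s - u)).comp_const_sub s u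

theorem hasDerivAt_denominator (J : IsJacobiTriple m sn cn dn) (s u : ℂ) :
    HasDerivAt (fun u => 1 - m * sn u ^ 2 * sn (s - u) ^ 2)
      (-2 * m * sn u * sn (s - u) *
        (cn u * dn u * sn (s - u) - sn u * (cn (s - u) * dn (s - u)))) u :=
  ((((J.hasDerivAt_sn u).pow 2).const_mul m).mul
    ((J.hasDerivAt_sn_const_sub s u).pow 2)).const_sub 1 |>.congr_deriv <| by
      simp only [Pi.pow_apply]; ring

theorem hasDerivAt_numerator (J : IsJacobiTriple m sn cn dn) (s u : ℂ) :
    HasDerivAt (fun u => cn u * dn u * sn (s - u) + sn u * (cn (s - u) * dn (s - u)))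
      (2 * m * sn u * sn (s - u) * (sn u ^ 2 - sn (s - u) ^ 2)) u :=
  ((J.hasDerivAt_cn_mul_dn u).mul (J.hasDerivAt_sn_const_sub s u)).add
    ((J.hasDerivAt_sn u).mul ((J.hasDerivAt_cn_mul_dn (s - u)).comp_const_sub s u))
    |>.congr_deriv (by ring)

theorem sn_add_mul_one_sub (J : IsJacobiTriple m sn cn dn) (x y : ℂ) :
    sn (x + y) * (1 - m * sn x ^ 2 * sn y ^ 2)
      = cn x * dn x * sn y + sn x * (cn y * dn y) := by
  set s := x + y
  have hC := eq_zero_of_mul_deriv_eq_deriv_mul (z₀ := 0) (J.hasDerivAt_denominator s)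
    (fun u => (J.hasDerivAt_numerator s u).sub ((J.hasDerivAt_denominator s u).const_mul (sn s)))
    (fun u => by
      simp only [Pi.sub_apply]
      linear_combination (2 * m * sn u * sn (s - u)) * J.numerator_mul_det u (s - u))
    (by simp [J.sn_zero]) (by simp [J.sn_zero, J.cn_zero, J.dn_zero])
  have hCx := congrFun hC x
  simp only [Pi.sub_apply, Pi.zero_apply, show s - x = y from add_sub_cancel_left x y] at hCx
  linear_combination -hCx

theorem sn_add_mul_det (J : IsJacobiTriple m sn cn dn) (x y : ℂ) :
    sn (x + y) * (cn x * dn x * sn y - sn x * (cn y * dn y)) = sn y ^ 2 - sn x ^ 2 := by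
  have hsn := J.differentiable_sn
  have hsn_cont := hsn.continuous
  have hcn := J.differentiable_cn
  have hdn := J.differentiable_dn
  have hE := Differentiable.eq_zero_of_mul_eq_zero (z₀ := 0)
    (f := fun x => 1 - m * sn x ^ 2 * sn y ^ 2)
    (g := fun x =>
      sn (x + y) * (cn x * dn x * sn y - sn x * (cn y * dn y)) - (sn y ^ 2 - sn x ^ 2))
    (by fun_prop) (by fun_prop) (by simp [J.sn_zero])
    (fun x => by
      linear_combination (cn x * dn x * sn y - sn x * (cn y * dn y)) * J.sn_add_mul_one_sub x y
        + J.numerator_mul_det x y)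
  exact sub_eq_zero.1 (congrFun hE x)

end IsJacobiTriple

theorem stmt_16
    (m : ℂ) (sn cn dn : ℂ → ℂ)
    (hsn : Differentiable ℂ sn) (hcn : Differentiable ℂ cn) (hdn : Differentiable ℂ dn)
    (hpyth1 : ∀ x, sn x ^ 2 + cn x ^ 2 = 1)
    (hpyth2 : ∀ x, dn x ^ 2 + m * sn x ^ 2 = 1)
    (hsn' : ∀ x, deriv sn x = cn x * dn x)
    (hcn' : ∀ x, deriv cn x = -(sn x * dn x))
    (hdn' : ∀ x, deriv dn x = -(m * sn x * cn x))
    (hsn0 : sn 0 = 0) (hcn0 : cn 0 = 1) (hdn0 : dn 0 = 1) :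
    ∀ x y : ℂ, sn (x + y) * (deriv sn x * sn y - deriv sn y * sn x)
      = sn y ^ 2 - sn x ^ 2 := by
  have J : IsJacobiTriple m sn cn dn :=
    { sn_sq_add_cn_sq := hpyth1
      dn_sq_add_mul_sn_sq := hpyth2
      hasDerivAt_sn := fun x => hsn' x ▸ (hsn x).hasDerivAt
      hasDerivAt_cn := fun x => hcn' x ▸ (hcn x).hasDerivAt
      hasDerivAt_dn := fun x => hdn' x ▸ (hdn x).hasDerivAt
      sn_zero := hsn0
      cn_zero := hcn0
      dn_zero := hdn0 }
  intro x y
  rw [hsn' x, hsn' y]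
  linear_combination J.sn_add_mul_det x y
end
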